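/- The Grassmann analytic continuation z : C^∞(ℝ^m, G_L) → G^∞(G_{L,0}^m, G_L) is linear and multiplicative on functions valued in the even (hence commutative) part: z(fg) = z(f)z(g) for smooth f, g : ℝ^m → G_{L,0}. -/

import Mathlib

open scoped BigOperators

/-- The real Grassmann algebra with `L` generators, modeled as coefficient
functions on the monomial basis indexed by subsets of `Fin L`. -/
abbrev GA (L : ℕ) := Finset (Fin L) → ℝ

namespace GA

variable {L : ℕ}

/-- The sign obtained when merging the increasing monomial indexed by `A`
with the one indexed by `B`. -/
noncomputable def msign (A B : Finset (Fin L)) : ℝ :=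
  (-1 : ℝ) ^ (((A ×ˢ B).filter fun p => p.2 < p.1).card)

/-- Grassmann multiplication. -/
noncomputable def gmul (q r : GA L) : GA L :=
  fun S => ∑ A ∈ S.powerset, msign A (S \ A) * q A * r (S \ A)

/-- The identity element `1 = ξ_Ω`. -/
noncomputable def gone : GA L := fun S => if S = ∅ then 1 else 0

/-- The body of an element: the coefficient of the empty monomial. -/
def body (q : GA L) : ℝ := q ∅

/-- The soul of an element: `q - q_b · 1`. -/
noncomputable def soul (q : GA L) : GA L := q - body q • gone

/-- Powers with respect to Grassmann multiplication. -/
noncomputable def gpow (q : GA L) : ℕ → GA L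
  | 0 => gone
  | n + 1 => gmul q (gpow q n)

end GA

namespace GA

variable {L m : ℕ}

/-- The partial derivative of a `G_L`-valued function in the `j`-th coordinate
direction. -/
noncomputable def pderiv (j : Fin m) (f : (Fin m → ℝ) → GA L) : (Fin m → ℝ) → GA L :=
  fun x => fderiv ℝ f x (Pi.single j 1)

/-- Iterated partial derivative in the `j`-th direction. -/
noncomputable def pderivIter (j : Fin m) : ℕ → ((Fin m → ℝ) → GA L) → ((Fin m → ℝ) → GA L)
  | 0, f => f
  | n + 1, f => pderiv j (pderivIter j n f)

/-- The multi-index partial derivative `∂₁^{ι 1} ⋯ ∂_m^{ι m}`. -/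
noncomputable def Dmulti (ι : Fin m → ℕ) (f : (Fin m → ℝ) → GA L) : (Fin m → ℝ) → GA L :=
  (List.finRange m).foldr (fun j g => pderivIter j (ι j) g) f

/-- The body projection `ε : G_{L,0}^m → ℝ^m`. -/
def bodyVec (x : Fin m → GA L) : Fin m → ℝ := fun j => GA.body (x j)

/-- The product `s(x₁)^{ι 1} ⋯ s(x_m)^{ι m}` of powers of the souls. -/
noncomputable def soulProd (x : Fin m → GA L) (ι : Fin m → ℕ) : GA L :=
  (List.finRange m).foldr (fun j acc => gmul (gpow (soul (x j)) (ι j)) acc) gone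

/-- The Grassmann analytic continuation
`z(f)(x) = Σ_ι (1/ι!) (∂^ι f)(ε(x)) · s(x₁)^{ι₁} ⋯ s(x_m)^{ι_m}`; the sum is finite
since each soul is nilpotent with `s(x_i)^(L+1) = 0`. -/
noncomputable def zCont (f : (Fin m → ℝ) → GA L) (x : Fin m → GA L) : GA L :=
  ∑ ι : Fin m → Fin (L + 1),
    ((∏ j, (Nat.factorial (ι j) : ℝ))⁻¹) •
      gmul (Dmulti (fun j => (ι j : ℕ)) f (bodyVec x)) (soulProd x (fun j => (ι j : ℕ)))

end GA

/-- The even part `G_{L,0}`: the span of the monomials of even degree. -/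
def evenPart (L : ℕ) : Set (GA L) := {q | ∀ S : Finset (Fin L), ¬ Even S.card → q S = 0}

namespace GA
variable {L : ℕ}

lemma msign_empty_left (B : Finset (Fin L)) : msign ∅ B = 1 := by
  simp [msign]

lemma msign_empty_right (A : Finset (Fin L)) : msign A ∅ = 1 := by
  simp [msign]

lemma gone_gmul (q : GA L) : gmul gone q = q := by
  funext S
  rw [gmul, Finset.sum_eq_single (∅ : Finset (Fin L))]
  · simp [msign_empty_left, gone]
  · intro A _ hA
    simp [gone, hA]
  · intro h
    exact absurd (Finset.empty_mem_powerset S) h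

lemma gmul_gone (q : GA L) : gmul q gone = q := by
  funext S
  rw [gmul, Finset.sum_eq_single S]
  · simp [msign_empty_right, gone]
  · intro A hA hAS
    have : S \ A ≠ ∅ := by
      intro h
      exact hAS (Finset.Subset.antisymm (Finset.mem_powerset.1 hA)
        (Finset.sdiff_eq_empty_iff_subset.1 h))
    simp [gone, this]
  · intro h
    exact absurd (Finset.mem_powerset_self S) h

lemma gmul_add (q r t : GA L) : gmul q (r + t) = gmul q r + gmul q t := by
  funext S
  simp [gmul, mul_add, Finset.sum_add_distrib]

lemma add_gmul (q r t : GA L) : gmul (q + r) t = gmul q t + gmul r t := by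
  funext S
  simp [gmul, mul_add, add_mul, Finset.sum_add_distrib]

lemma gmul_smul (c : ℝ) (q r : GA L) : gmul q (c • r) = c • gmul q r := by
  funext S
  simp [gmul, Finset.mul_sum]
  congr 1; funext A; ring

lemma smul_gmul (c : ℝ) (q r : GA L) : gmul (c • q) r = c • gmul q r := by
  funext S
  simp [gmul, Finset.mul_sum]
  congr 1; funext A; ring

lemma gmul_zero (q : GA L) : gmul q 0 = 0 := by
  funext S; simp [gmul]

lemma zero_gmul (q : GA L) : gmul 0 q = 0 := by
  funext S; simp [gmul]

lemma msign_union_left {A B : Finset (Fin L)} (C : Finset (Fin L)) (h : Disjoint A B) :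
    msign (A ∪ B) C = msign A C * msign B C := by
  unfold msign
  rw [← pow_add]
  congr 1
  rw [Finset.union_product, Finset.filter_union, Finset.card_union_of_disjoint]
  exact Finset.disjoint_filter_filter
    (Finset.disjoint_left.2 fun p hp hp' => (Finset.disjoint_left.1 h
      (Finset.mem_product.1 hp).1 (Finset.mem_product.1 hp').1))

lemma msign_union_right (A : Finset (Fin L)) {B C : Finset (Fin L)} (h : Disjoint B C) :
    msign A (B ∪ C) = msign A B * msign A C := by
  unfold msign
  rw [← pow_add]
  congr 1
  rw [Finset.product_union, Finset.filter_union, Finset.card_union_of_disjoint]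
  exact Finset.disjoint_filter_filter
    (Finset.disjoint_left.2 fun p hp hp' => (Finset.disjoint_left.1 h
      (Finset.mem_product.1 hp).2 (Finset.mem_product.1 hp').2))

lemma sdiff_sdiff_aux {S A T : Finset (Fin L)} (hAT : A ⊆ T) :
    (S \ A) \ (T \ A) = S \ T := by
  ext x; simp only [Finset.mem_sdiff]; constructor
  · rintro ⟨⟨hS, hA⟩, h⟩; exact ⟨hS, fun hT => h ⟨hT, hA⟩⟩
  · rintro ⟨hS, hT⟩; exact ⟨⟨hS, fun hA => hT (hAT hA)⟩, fun ⟨h1, _⟩ => hT h1⟩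

lemma sdiff_union_aux {S A T : Finset (Fin L)} (hAT : A ⊆ T) (hTS : T ⊆ S) :
    S \ A = (T \ A) ∪ (S \ T) := by
  ext x; simp only [Finset.mem_sdiff, Finset.mem_union]
  constructor
  · rintro ⟨hS, hA⟩
    by_cases hT : x ∈ T
    · exact Or.inl ⟨hT, hA⟩
    · exact Or.inr ⟨hS, hT⟩
  · rintro (⟨hT, hA⟩ | ⟨hS, hT⟩)
    · exact ⟨hTS hT, hA⟩
    · exact ⟨hS, fun hA => hT (hAT hA)⟩

lemma gmul_assoc (a b c : GA L) : gmul (gmul a b) c = gmul a (gmul b c) := by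
  funext S
  have hL : gmul (gmul a b) c S
      = ∑ p ∈ S.powerset.sigma (fun T => T.powerset),
          msign p.1 (S \ p.1) * (msign p.2 (p.1 \ p.2) * a p.2 * b (p.1 \ p.2)) * c (S \ p.1) := by
    rw [gmul, Finset.sum_sigma]
    refine Finset.sum_congr rfl fun T hT => ?_
    rw [gmul, Finset.mul_sum, Finset.sum_mul]
  have hR : gmul a (gmul b c) S
      = ∑ p ∈ S.powerset.sigma (fun A => (S \ A).powerset),
          msign p.1 (S \ p.1) * a p.1 *
            (msign p.2 ((S \ p.1) \ p.2) * b p.2 * c ((S \ p.1) \ p.2)) := by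
    rw [gmul, Finset.sum_sigma]
    refine Finset.sum_congr rfl fun A hA => ?_
    rw [gmul, Finset.mul_sum]
  rw [hL, hR]
  refine Finset.sum_nbij' (i := fun p => ⟨p.2, p.1 \ p.2⟩) (j := fun p => ⟨p.1 ∪ p.2, p.1⟩)
    ?_ ?_ ?_ ?_ ?_
  · rintro ⟨T, A⟩ hp
    simp only [Finset.mem_sigma, Finset.mem_powerset] at hp ⊢
    obtain ⟨hTS, hAT⟩ := hp
    exact ⟨hAT.trans hTS, Finset.sdiff_subset_sdiff hTS (le_refl A)⟩
  · rintro ⟨A, B⟩ hp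
    simp only [Finset.mem_sigma, Finset.mem_powerset] at hp ⊢
    obtain ⟨hAS, hBSA⟩ := hp
    exact ⟨Finset.union_subset hAS (hBSA.trans (Finset.sdiff_subset)),
      Finset.subset_union_left⟩
  · rintro ⟨T, A⟩ hp
    simp only [Finset.mem_sigma, Finset.mem_powerset] at hp
    obtain ⟨hTS, hAT⟩ := hp
    simp only [Sigma.mk.inj_iff]
    exact ⟨Finset.union_sdiff_of_subset hAT, HEq.rfl⟩
  · rintro ⟨A, B⟩ hp
    simp only [Finset.mem_sigma, Finset.mem_powerset] at hp
    obtain ⟨hAS, hBSA⟩ := hp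
    have hd : Disjoint A B := (Finset.disjoint_sdiff.mono_right hBSA)
    simp only [Sigma.mk.inj_iff]
    exact ⟨trivial, heq_of_eq (Finset.union_sdiff_cancel_left hd)⟩
  · rintro ⟨T, A⟩ hp
    simp only [Finset.mem_sigma, Finset.mem_powerset] at hp
    obtain ⟨hTS, hAT⟩ := hp
    have e1 : (S \ A) \ (T \ A) = S \ T := sdiff_sdiff_aux hAT
    have e2 : S \ A = (T \ A) ∪ (S \ T) := sdiff_union_aux hAT hTS
    have hdta : Disjoint A (T \ A) := Finset.disjoint_sdiff
    have hdts : Disjoint (T \ A) (S \ T) := by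
      rw [Finset.disjoint_left]
      intro x hx hx'
      exact (Finset.mem_sdiff.1 hx').2 ((Finset.mem_sdiff.1 hx).1)
    have hsT : msign T (S \ T) = msign A (S \ T) * msign (T \ A) (S \ T) := by
      have h2 := msign_union_left (A := A) (B := T \ A) (S \ T) hdta
      rw [Finset.union_sdiff_of_subset hAT] at h2
      exact h2
    have hsA : msign A (S \ A) = msign A (T \ A) * msign A (S \ T) := by
      rw [e2]
      exact msign_union_right _ hdts
    simp only [e1, hsT, hsA]
    ring

lemma msign_mul_self (A B : Finset (Fin L)) : msign A B * msign A B = 1 := by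
  unfold msign
  rw [← pow_add, ← two_mul, pow_mul]
  norm_num

lemma msign_ne_zero (A B : Finset (Fin L)) : msign A B ≠ 0 := by
  unfold msign
  exact pow_ne_zero _ (by norm_num)

lemma msign_swap {A B : Finset (Fin L)} (h : Disjoint A B) :
    msign A B * msign B A = (-1 : ℝ) ^ (A.card * B.card) := by
  unfold msign
  rw [← pow_add]
  congr 1
  have h1 : ((B ×ˢ A).filter fun p => p.2 < p.1).card
      = ((A ×ˢ B).filter fun p => p.1 < p.2).card := by
    refine Finset.card_nbij' (i := fun p => (p.2, p.1)) (j := fun p => (p.2, p.1)) ?_ ?_ ?_ ?_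
    · rintro ⟨b, a⟩ hp
      simp only [Finset.mem_coe, Finset.mem_filter, Finset.mem_product] at hp ⊢
      exact ⟨⟨hp.1.2, hp.1.1⟩, hp.2⟩
    · rintro ⟨a, b⟩ hp
      simp only [Finset.mem_coe, Finset.mem_filter, Finset.mem_product] at hp ⊢
      exact ⟨⟨hp.1.2, hp.1.1⟩, hp.2⟩
    · rintro ⟨b, a⟩ _; rfl
    · rintro ⟨a, b⟩ _; rfl
  rw [h1]
  have h2 : ((A ×ˢ B).filter fun p => p.1 < p.2) = ((A ×ˢ B).filter fun p => ¬ p.2 < p.1) := by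
    apply Finset.filter_congr
    intro p hp
    have hm := Finset.mem_product.1 hp
    have hne : p.1 ≠ p.2 := fun e => Finset.disjoint_left.1 h hm.1 (e ▸ hm.2)
    exact ⟨fun hlt => asymm hlt, fun hlt => (hne.lt_or_gt).resolve_right hlt⟩
  rw [h2, Finset.card_filter_add_card_filter_not, Finset.card_product]

lemma msign_comm_even {A B : Finset (Fin L)} (h : Disjoint A B) (hA : Even A.card) :
    msign B A = msign A B := by
  have h1 := msign_swap h
  have h2 : ((-1 : ℝ)) ^ (A.card * B.card) = 1 := (hA.mul_right B.card).neg_one_pow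
  rw [h2] at h1
  have h3 := msign_mul_self A B
  exact mul_left_cancel₀ (msign_ne_zero A B) (h1.trans h3.symm)

lemma card_eq_of_subset {S A : Finset (Fin L)} (h : A ⊆ S) :
    S.card = A.card + (S \ A).card := by
  have := Finset.card_le_card h
  rw [Finset.card_sdiff_of_subset h]
  omega

lemma even_gone : gone ∈ evenPart L := by
  intro S hS
  rcases eq_or_ne S ∅ with h | h
  · subst h; simp at hS
  · simp [gone, h]

lemma even_gmul {q r : GA L} (hq : q ∈ evenPart L) (hr : r ∈ evenPart L) :
    gmul q r ∈ evenPart L := by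
  intro S hS
  rw [gmul]
  apply Finset.sum_eq_zero
  intro A hA
  by_cases h1 : Even A.card
  · by_cases h2 : Even (S \ A).card
    · exact absurd (by rw [card_eq_of_subset (Finset.mem_powerset.1 hA)]; exact h1.add h2) hS
    · rw [hr _ h2]; ring
  · rw [hq _ h1]; ring

lemma gmul_comm_even {q r : GA L} (hq : q ∈ evenPart L) (hr : r ∈ evenPart L) :
    gmul q r = gmul r q := by
  funext S
  rw [gmul, gmul]
  refine Finset.sum_nbij' (i := fun A => S \ A) (j := fun A => S \ A) ?_ ?_ ?_ ?_ ?_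
  · intro A _; exact Finset.mem_powerset.2 Finset.sdiff_subset
  · intro A _; exact Finset.mem_powerset.2 Finset.sdiff_subset
  · intro A hA; exact Finset.sdiff_sdiff_eq_self (Finset.mem_powerset.1 hA)
  · intro A hA; exact Finset.sdiff_sdiff_eq_self (Finset.mem_powerset.1 hA)
  · intro A hA
    show msign A (S \ A) * q A * r (S \ A)
        = msign (S \ A) (S \ (S \ A)) * r (S \ A) * q (S \ (S \ A))
    rw [Finset.sdiff_sdiff_eq_self (Finset.mem_powerset.1 hA)]
    by_cases h1 : Even A.card
    · rw [msign_comm_even Finset.disjoint_sdiff h1]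
      ring
    · rw [hq _ h1]
      ring

lemma gmul_mul_mul_comm {p q P Q : GA L} (hq : q ∈ evenPart L) (hP : P ∈ evenPart L) :
    gmul (gmul p q) (gmul P Q) = gmul (gmul p P) (gmul q Q) := by
  rw [gmul_assoc p q _, ← gmul_assoc q P Q, gmul_comm_even hq hP, gmul_assoc P q Q,
    ← gmul_assoc p P _]

lemma gmul_vanish {q r : GA L} {n k : ℕ}
    (hq : ∀ S : Finset (Fin L), S.card < n → q S = 0)
    (hr : ∀ S : Finset (Fin L), S.card < k → r S = 0) :
    ∀ S : Finset (Fin L), S.card < n + k → gmul q r S = 0 := by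
  intro S hS
  rw [gmul]
  apply Finset.sum_eq_zero
  intro A hA
  by_cases h1 : A.card < n
  · rw [hq _ h1]; ring
  · have := card_eq_of_subset (Finset.mem_powerset.1 hA)
    rw [hr _ (by omega)]; ring

lemma body_soul (q : GA L) : body (soul q) = 0 := by
  simp [soul, body, gone]

lemma gpow_vanish {q : GA L} (hq : body q = 0) (n : ℕ) :
    ∀ S : Finset (Fin L), S.card < n → gpow q n S = 0 := by
  induction n with
  | zero => intro S hS; omega
  | succ n ih =>
    have hq1 : ∀ S : Finset (Fin L), S.card < 1 → q S = 0 := by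
      intro S hS
      have h : S = ∅ := Finset.card_eq_zero.1 (by omega)
      rw [h]; exact hq
    intro S hS
    exact gmul_vanish hq1 ih S (by omega)

lemma gpow_eq_zero_of_gt {q : GA L} (hq : body q = 0) {n : ℕ} (hn : L < n) :
    gpow q n = 0 := by
  funext S
  have hcard : S.card ≤ L := by
    have h := Finset.card_le_univ S
    simpa using h
  exact gpow_vanish hq n S (lt_of_le_of_lt hcard hn)

lemma even_soul {q : GA L} (hq : q ∈ evenPart L) : soul q ∈ evenPart L := by
  intro S hS
  have h1 := hq S hS
  have h2 := even_gone (L := L) S hS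
  simp [soul, h1, h2]

lemma even_gpow {q : GA L} (hq : q ∈ evenPart L) (n : ℕ) : gpow q n ∈ evenPart L := by
  induction n with
  | zero => exact even_gone
  | succ n ih => exact even_gmul hq ih

lemma gpow_add (q : GA L) (a b : ℕ) : gpow q (a + b) = gmul (gpow q a) (gpow q b) := by
  induction a with
  | zero => rw [Nat.zero_add]; exact (gone_gmul _).symm
  | succ a ih =>
    have h : a + 1 + b = (a + b) + 1 := by omega
    rw [h]
    show gmul q (gpow q (a + b)) = _
    rw [ih, ← gmul_assoc]
    rfl

variable {m : ℕ}

/-- Auxiliary fold of soul powers over an explicit list of coordinates. -/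
noncomputable def sfold (x : Fin m → GA L) (ι : Fin m → ℕ) : List (Fin m) → GA L
  | [] => gone
  | j :: t => gmul (gpow (soul (x j)) (ι j)) (sfold x ι t)

lemma soulProd_eq_sfold (x : Fin m → GA L) (ι : Fin m → ℕ) :
    soulProd x ι = sfold x ι (List.finRange m) := by
  rw [soulProd]
  induction (List.finRange m) with
  | nil => rfl
  | cons j t ih => rw [List.foldr_cons, ih]; rfl

lemma even_sfold {x : Fin m → GA L} (hx : ∀ j, x j ∈ evenPart L) (ι : Fin m → ℕ)
    (l : List (Fin m)) : sfold x ι l ∈ evenPart L := by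
  induction l with
  | nil => exact even_gone
  | cons j t ih => exact even_gmul (even_gpow (even_soul (hx j)) _) ih

lemma sfold_add {x : Fin m → GA L} (hx : ∀ j, x j ∈ evenPart L) (ι κ : Fin m → ℕ)
    (l : List (Fin m)) : sfold x (ι + κ) l = gmul (sfold x ι l) (sfold x κ l) := by
  induction l with
  | nil => exact (gone_gmul _).symm
  | cons j t ih =>
    show gmul (gpow (soul (x j)) ((ι + κ) j)) (sfold x (ι + κ) t) = _
    rw [Pi.add_apply, gpow_add, ih]
    exact gmul_mul_mul_comm (even_gpow (even_soul (hx j)) _) (even_sfold hx ι t)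

lemma sfold_eq_zero {x : Fin m → GA L} {ι : Fin m → ℕ} {j : Fin m} {l : List (Fin m)}
    (hj : j ∈ l) (h : gpow (soul (x j)) (ι j) = 0) : sfold x ι l = 0 := by
  induction l with
  | nil => simp at hj
  | cons i t ih =>
    rcases List.mem_cons.1 hj with h' | h'
    · subst h'
      show gmul (gpow (soul (x j)) (ι j)) (sfold x ι t) = 0
      rw [h, zero_gmul]
    · show gmul _ (sfold x ι t) = 0
      rw [ih h', gmul_zero]

lemma soulProd_add {x : Fin m → GA L} (hx : ∀ j, x j ∈ evenPart L) (ι κ : Fin m → ℕ) :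
    soulProd x (ι + κ) = gmul (soulProd x ι) (soulProd x κ) := by
  rw [soulProd_eq_sfold, soulProd_eq_sfold, soulProd_eq_sfold]
  exact sfold_add hx ι κ _

lemma soulProd_eq_zero {x : Fin m → GA L} {ι : Fin m → ℕ} (j : Fin m) (hj : L < ι j) :
    soulProd x ι = 0 := by
  rw [soulProd_eq_sfold]
  exact sfold_eq_zero (List.mem_finRange j) (gpow_eq_zero_of_gt (body_soul _) hj)

lemma even_soulProd {x : Fin m → GA L} (hx : ∀ j, x j ∈ evenPart L) (ι : Fin m → ℕ) :
    soulProd x ι ∈ evenPart L := by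
  rw [soulProd_eq_sfold]; exact even_sfold hx ι _

end GA

namespace GA
variable {L m : ℕ}

/-- `gmul` as a bilinear map. -/
noncomputable def gmulLM : GA L →ₗ[ℝ] GA L →ₗ[ℝ] GA L :=
  LinearMap.mk₂ ℝ gmul add_gmul (fun c q r => smul_gmul c q r) gmul_add
    (fun c q r => gmul_smul c q r)

/-- `gmul` as a continuous bilinear map. -/
noncomputable def gmulCLM : GA L →L[ℝ] GA L →L[ℝ] GA L :=
  LinearMap.toContinuousLinearMap
    { toFun := fun q => LinearMap.toContinuousLinearMap (gmulLM q)
      map_add' := by intro q r; ext t; simp [map_add]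
      map_smul' := by intro c q; ext t; simp }

@[simp] lemma gmulCLM_apply (q r : GA L) : gmulCLM q r = gmul q r := rfl

lemma contDiff_gmul {f g : (Fin m → ℝ) → GA L} (hf : ContDiff ℝ (⊤ : ℕ∞) f) (hg : ContDiff ℝ (⊤ : ℕ∞) g) :
    ContDiff ℝ (⊤ : ℕ∞) (fun y => gmul (f y) (g y)) :=
  ((gmulCLM.contDiff).comp hf).clm_apply hg

lemma contDiff_pderiv {f : (Fin m → ℝ) → GA L} (hf : ContDiff ℝ (⊤ : ℕ∞) f) (j : Fin m) :
    ContDiff ℝ (⊤ : ℕ∞) (pderiv j f) :=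
  (hf.fderiv_right (m := (⊤ : ℕ∞)) (by simp)).clm_apply contDiff_const

lemma contDiff_pderivIter {f : (Fin m → ℝ) → GA L} (hf : ContDiff ℝ (⊤ : ℕ∞) f) (j : Fin m) (n : ℕ) :
    ContDiff ℝ (⊤ : ℕ∞) (pderivIter j n f) := by
  induction n with
  | zero => exact hf
  | succ n ih => exact contDiff_pderiv ih j

lemma pderiv_add {f g : (Fin m → ℝ) → GA L} (hf : Differentiable ℝ f)
    (hg : Differentiable ℝ g) (j : Fin m) :
    pderiv j (fun y => f y + g y) = fun y => pderiv j f y + pderiv j g y := by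
  funext y
  show fderiv ℝ (fun y => f y + g y) y _ = _
  rw [fderiv_fun_add (hf y) (hg y)]
  rfl

lemma pderiv_smul (c : ℝ) {f : (Fin m → ℝ) → GA L} (hf : Differentiable ℝ f) (j : Fin m) :
    pderiv j (fun y => c • f y) = fun y => c • pderiv j f y := by
  funext y
  show fderiv ℝ (fun y => c • f y) y _ = _
  rw [fderiv_fun_const_smul (hf y) c]
  rfl

lemma pderiv_sum {α : Type*} (s : Finset α) {F : α → (Fin m → ℝ) → GA L}
    (hF : ∀ i ∈ s, Differentiable ℝ (F i)) (j : Fin m) :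
    pderiv j (fun y => ∑ i ∈ s, F i y) = fun y => ∑ i ∈ s, pderiv j (F i) y := by
  funext y
  show fderiv ℝ (fun y => ∑ i ∈ s, F i y) y _ = _
  rw [fderiv_fun_sum (fun i hi => hF i hi y), ContinuousLinearMap.sum_apply]
  rfl

lemma pderivIter_smul (c : ℝ) {f : (Fin m → ℝ) → GA L} (hf : ContDiff ℝ (⊤ : ℕ∞) f) (j : Fin m)
    (n : ℕ) : pderivIter j n (fun y => c • f y) = fun y => c • pderivIter j n f y := by
  induction n with
  | zero => rfl
  | succ n ih =>
    show pderiv j (pderivIter j n fun y => c • f y) = _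
    rw [ih]
    exact pderiv_smul c ((contDiff_pderivIter hf j n).differentiable (by simp)) j

lemma pderivIter_sum {α : Type*} (s : Finset α) {F : α → (Fin m → ℝ) → GA L}
    (hF : ∀ i ∈ s, ContDiff ℝ (⊤ : ℕ∞) (F i)) (j : Fin m) (n : ℕ) :
    pderivIter j n (fun y => ∑ i ∈ s, F i y) = fun y => ∑ i ∈ s, pderivIter j n (F i) y := by
  induction n with
  | zero => rfl
  | succ n ih =>
    show pderiv j (pderivIter j n fun y => ∑ i ∈ s, F i y) = _
    rw [ih]
    exact pderiv_sum s (fun i hi => (contDiff_pderivIter (hF i hi) j n).differentiable (by simp)) j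

lemma pderiv_gmul {f g : (Fin m → ℝ) → GA L} (hf : ContDiff ℝ (⊤ : ℕ∞) f) (hg : ContDiff ℝ (⊤ : ℕ∞) g)
    (j : Fin m) :
    pderiv j (fun y => gmul (f y) (g y))
      = fun y => gmul (pderiv j f y) (g y) + gmul (f y) (pderiv j g y) := by
  funext y
  have hf' : HasFDerivAt f (fderiv ℝ f y) y :=
    ((hf.differentiable (by simp)) y).hasFDerivAt
  have hg' : HasFDerivAt g (fderiv ℝ g y) y :=
    ((hg.differentiable (by simp)) y).hasFDerivAt
  have h1 : HasFDerivAt (fun y => gmulCLM (f y)) ((gmulCLM (L := L)).comp (fderiv ℝ f y)) y :=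
    gmulCLM.hasFDerivAt.comp y hf'
  have h2 := h1.clm_apply hg'
  have h3 := h2.fderiv
  show fderiv ℝ (fun y => gmul (f y) (g y)) y (Pi.single j 1) = _
  have h4 : (fun y => gmul (f y) (g y)) = fun y => gmulCLM (f y) (g y) := rfl
  rw [h4, h3]
  simp only [ContinuousLinearMap.add_apply, ContinuousLinearMap.coe_comp', Function.comp_apply,
    ContinuousLinearMap.flip_apply, gmulCLM_apply]
  rw [add_comm]
  rfl

lemma even_pderiv {f : (Fin m → ℝ) → GA L} (hf : Differentiable ℝ f)
    (hfe : ∀ y, f y ∈ evenPart L) (j : Fin m) (y : Fin m → ℝ) :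
    pderiv j f y ∈ evenPart L := by
  intro S hS
  have h2 : fderiv ℝ (fun y => (ContinuousLinearMap.proj (R := ℝ)
        (φ := fun _ : Finset (Fin L) => ℝ) S) (f y)) y
      = (ContinuousLinearMap.proj S).comp (fderiv ℝ f y) :=
    (((ContinuousLinearMap.proj (R := ℝ) (φ := fun _ : Finset (Fin L) => ℝ) S).hasFDerivAt).comp
      y (hf y).hasFDerivAt).fderiv
  have h1 : (fun y => (ContinuousLinearMap.proj (R := ℝ)
      (φ := fun _ : Finset (Fin L) => ℝ) S) (f y)) = fun _ => (0 : ℝ) :=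
    funext fun y => hfe y S hS
  rw [h1, fderiv_fun_const] at h2
  have h5 : ((0 : (Fin m → ℝ) →L[ℝ] ℝ)) (Pi.single j 1)
      = ((ContinuousLinearMap.proj (R := ℝ) (φ := fun _ : Finset (Fin L) => ℝ) S).comp
        (fderiv ℝ f y)) (Pi.single j 1) := by rw [← h2]; rfl
  simpa [pderiv] using h5.symm

lemma even_pderivIter {f : (Fin m → ℝ) → GA L} (hf : ContDiff ℝ (⊤ : ℕ∞) f)
    (hfe : ∀ y, f y ∈ evenPart L) (j : Fin m) (n : ℕ) (y : Fin m → ℝ) :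
    pderivIter j n f y ∈ evenPart L := by
  induction n generalizing y with
  | zero => exact hfe y
  | succ n ih =>
    exact even_pderiv ((contDiff_pderivIter hf j n).differentiable (by simp)) (fun y => ih y) j y
lemma pderivIter_gmul {f g : (Fin m → ℝ) → GA L} (hf : ContDiff ℝ (⊤ : ℕ∞) f) (hg : ContDiff ℝ (⊤ : ℕ∞) g)
    (j : Fin m) (n : ℕ) :
    pderivIter j n (fun y => gmul (f y) (g y))
      = fun y => ∑ k ∈ Finset.range (n + 1), ((n.choose k : ℝ)) •
          gmul (pderivIter j k f y) (pderivIter j (n - k) g y) := by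
  induction n with
  | zero => funext y; simp [pderivIter]
  | succ n ih =>
    have hdk : ∀ k, ContDiff ℝ (⊤ : ℕ∞) (pderivIter j k f) := contDiff_pderivIter hf j
    have hdg : ∀ k, ContDiff ℝ (⊤ : ℕ∞) (pderivIter j k g) := contDiff_pderivIter hg j
    show pderiv j (pderivIter j n fun y => gmul (f y) (g y)) = _
    rw [ih, pderiv_sum _ (fun k _ =>
      (((contDiff_gmul (hdk k) (hdg (n - k))).const_smul
        ((n.choose k : ℝ)))).differentiable (by simp)) j]
    funext y
    have step : ∀ k ∈ Finset.range (n + 1),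
        pderiv j (fun y => ((n.choose k : ℝ)) •
            gmul (pderivIter j k f y) (pderivIter j (n - k) g y)) y
          = (n.choose k : ℝ) • gmul (pderivIter j (k + 1) f y) (pderivIter j (n + 1 - (k + 1)) g y)
            + (n.choose k : ℝ) • gmul (pderivIter j k f y) (pderivIter j (n + 1 - k) g y) := by
      intro k hk
      have hk' : k ≤ n := by
        have := Finset.mem_range.1 hk; omega
      rw [pderiv_smul _ ((contDiff_gmul (hdk k) (hdg (n - k))).differentiable (by simp)) j]
      rw [pderiv_gmul (hdk k) (hdg (n - k)) j]
      have e1 : n + 1 - (k + 1) = n - k := by omega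
      have e2 : n + 1 - k = (n - k) + 1 := by omega
      rw [e1, e2]
      simp only [smul_add]
      rfl
    rw [Finset.sum_congr rfl step, Finset.sum_add_distrib]
    rw [Finset.sum_range_succ' (fun k => (((n + 1).choose k : ℝ)) •
      gmul (pderivIter j k f y) (pderivIter j (n + 1 - k) g y)) (n + 1)]
    have hps : ∀ k ∈ Finset.range (n + 1),
        (((n + 1).choose (k + 1) : ℝ)) •
            gmul (pderivIter j (k + 1) f y) (pderivIter j (n + 1 - (k + 1)) g y)
          = ((n.choose k : ℝ)) •
              gmul (pderivIter j (k + 1) f y) (pderivIter j (n + 1 - (k + 1)) g y)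
            + ((n.choose (k + 1) : ℝ)) •
              gmul (pderivIter j (k + 1) f y) (pderivIter j (n + 1 - (k + 1)) g y) := by
      intro k _
      rw [Nat.choose_succ_succ]
      push_cast
      rw [add_smul]
    rw [Finset.sum_congr rfl hps, Finset.sum_add_distrib]
    have key : ∑ k ∈ Finset.range (n + 1), ((n.choose k : ℝ)) •
          gmul (pderivIter j k f y) (pderivIter j (n + 1 - k) g y)
        = (∑ k ∈ Finset.range (n + 1), ((n.choose (k + 1) : ℝ)) •
            gmul (pderivIter j (k + 1) f y) (pderivIter j (n + 1 - (k + 1)) g y))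
          + (((n + 1).choose 0 : ℝ)) •
            gmul (pderivIter j 0 f y) (pderivIter j (n + 1 - 0) g y) := by
      rw [Finset.sum_range_succ' (fun k => ((n.choose k : ℝ)) •
        gmul (pderivIter j k f y) (pderivIter j (n + 1 - k) g y)) n]
      rw [Finset.sum_range_succ (fun k => ((n.choose (k + 1) : ℝ)) •
        gmul (pderivIter j (k + 1) f y) (pderivIter j (n + 1 - (k + 1)) g y)) n]
      rw [Nat.choose_succ_self]
      push_cast
      rw [zero_smul, add_zero, Nat.choose_zero_right, Nat.choose_zero_right]
    rw [key]
    abel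

/-- Multi-index derivative along an explicit list of coordinates. -/
noncomputable def Dlist (l : List (Fin m)) (ι : Fin m → ℕ) (f : (Fin m → ℝ) → GA L) :
    (Fin m → ℝ) → GA L :=
  l.foldr (fun j g => pderivIter j (ι j) g) f

lemma Dmulti_eq_Dlist (ι : Fin m → ℕ) (f : (Fin m → ℝ) → GA L) :
    Dmulti ι f = Dlist (List.finRange m) ι f := rfl

lemma Dlist_nil (ι : Fin m → ℕ) (f : (Fin m → ℝ) → GA L) : Dlist [] ι f = f := rfl

lemma Dlist_cons (j : Fin m) (t : List (Fin m)) (ι : Fin m → ℕ) (f : (Fin m → ℝ) → GA L) :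
    Dlist (j :: t) ι f = pderivIter j (ι j) (Dlist t ι f) := rfl

lemma contDiff_Dlist {f : (Fin m → ℝ) → GA L} (hf : ContDiff ℝ (⊤ : ℕ∞) f) (l : List (Fin m))
    (ι : Fin m → ℕ) : ContDiff ℝ (⊤ : ℕ∞) (Dlist l ι f) := by
  induction l with
  | nil => exact hf
  | cons j t ih => exact contDiff_pderivIter ih j (ι j)

lemma Dlist_congr {l : List (Fin m)} {ι κ : Fin m → ℕ} (f : (Fin m → ℝ) → GA L)
    (h : ∀ j ∈ l, ι j = κ j) : Dlist l ι f = Dlist l κ f := by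
  induction l with
  | nil => rfl
  | cons j t ih =>
    rw [Dlist_cons, Dlist_cons, h j List.mem_cons_self,
      ih (fun i hi => h i (List.mem_cons_of_mem j hi))]

lemma even_Dlist {f : (Fin m → ℝ) → GA L} (hf : ContDiff ℝ (⊤ : ℕ∞) f)
    (hfe : ∀ y, f y ∈ evenPart L) (l : List (Fin m)) (ι : Fin m → ℕ) (y : Fin m → ℝ) :
    Dlist l ι f y ∈ evenPart L := by
  induction l generalizing y with
  | nil => exact hfe y
  | cons j t ih => exact even_pderivIter (contDiff_Dlist hf t ι) (fun y => ih y) j (ι j) y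

lemma pderivIter_add {f g : (Fin m → ℝ) → GA L} (hf : ContDiff ℝ (⊤ : ℕ∞) f) (hg : ContDiff ℝ (⊤ : ℕ∞) g)
    (j : Fin m) (n : ℕ) :
    pderivIter j n (fun y => f y + g y) = fun y => pderivIter j n f y + pderivIter j n g y := by
  induction n with
  | zero => rfl
  | succ n ih =>
    show pderiv j (pderivIter j n fun y => f y + g y) = _
    rw [ih]
    exact pderiv_add ((contDiff_pderivIter hf j n).differentiable (by simp))
      ((contDiff_pderivIter hg j n).differentiable (by simp)) j

lemma Dlist_add {f g : (Fin m → ℝ) → GA L} (hf : ContDiff ℝ (⊤ : ℕ∞) f) (hg : ContDiff ℝ (⊤ : ℕ∞) g)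
    (l : List (Fin m)) (ι : Fin m → ℕ) :
    Dlist l ι (fun y => f y + g y) = fun y => Dlist l ι f y + Dlist l ι g y := by
  induction l with
  | nil => rfl
  | cons j t ih =>
    rw [Dlist_cons, ih, Dlist_cons, Dlist_cons]
    exact pderivIter_add (contDiff_Dlist hf t ι) (contDiff_Dlist hg t ι) j (ι j)

lemma Dlist_smul (c : ℝ) {f : (Fin m → ℝ) → GA L} (hf : ContDiff ℝ (⊤ : ℕ∞) f)
    (l : List (Fin m)) (ι : Fin m → ℕ) :
    Dlist l ι (fun y => c • f y) = fun y => c • Dlist l ι f y := by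
  induction l with
  | nil => rfl
  | cons j t ih =>
    rw [Dlist_cons, ih, Dlist_cons]
    exact pderivIter_smul c (contDiff_Dlist hf t ι) j (ι j)

/-- Restriction of a multi-index to a list of coordinates. -/
def maskL (l : List (Fin m)) (ι : Fin m → ℕ) : Fin m → ℕ := fun j => if j ∈ l then ι j else 0

lemma Dlist_gmul {f g : (Fin m → ℝ) → GA L} (hf : ContDiff ℝ (⊤ : ℕ∞) f) (hg : ContDiff ℝ (⊤ : ℕ∞) g) :
    ∀ (l : List (Fin m)), l.Nodup → ∀ ι : Fin m → ℕ,
    Dlist l ι (fun y => gmul (f y) (g y))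
      = fun y => ∑ κ ∈ Finset.Iic (maskL l ι),
          (∏ i, ((maskL l ι i).choose (κ i) : ℝ)) •
            gmul (Dlist l κ f y) (Dlist l (maskL l ι - κ) g y) := by
  intro l
  induction l with
  | nil =>
    intro _ ι
    funext y
    have h0 : maskL ([] : List (Fin m)) ι = 0 := by funext i; simp [maskL]
    rw [h0]
    have hIic : Finset.Iic (0 : Fin m → ℕ) = {0} := by
      ext κ
      simp only [Finset.mem_Iic, Finset.mem_singleton]
      constructor
      · intro h; funext i; exact Nat.le_zero.1 (h i)
      · rintro rfl; exact le_refl _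
    rw [hIic, Finset.sum_singleton]
    simp [Dlist_nil]
  | cons j t ih =>
    intro hnd ι
    have hj : j ∉ t := (List.nodup_cons.1 hnd).1
    have hndt : t.Nodup := (List.nodup_cons.1 hnd).2
    obtain ⟨mt, hmt⟩ : ∃ v : Fin m → ℕ, maskL t ι = v := ⟨_, rfl⟩
    have hmtj : mt j = 0 := by rw [← hmt]; simp [maskL, hj]
    have hmaskj : maskL (j :: t) ι j = ι j := by simp [maskL]
    have hmask : maskL (j :: t) ι = mt + Pi.single j (ι j) := by
      funext i
      by_cases hij : i = j
      · subst hij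
        have hl : maskL (i :: t) ι i = ι i := by simp [maskL]
        rw [hl, Pi.add_apply, Pi.single_eq_same, hmtj, Nat.zero_add]
      · rw [← hmt]; simp [maskL, hij, Pi.single_apply]
    rw [Dlist_cons, ih hndt ι]
    simp only [hmt]
    rw [pderivIter_sum _ (fun κ _ => ((contDiff_gmul (contDiff_Dlist hf t κ)
        (contDiff_Dlist hg t _)).const_smul _)) j (ι j)]
    funext y
    have step : ∀ κ ∈ Finset.Iic mt,
        pderivIter j (ι j) (fun y => (∏ i, ((mt i).choose (κ i) : ℝ)) •
            gmul (Dlist t κ f y) (Dlist t (mt - κ) g y)) y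
          = ∑ k ∈ Finset.range (ι j + 1),
              ((∏ i, ((mt i).choose (κ i) : ℝ)) * ((ι j).choose k : ℝ)) •
                gmul (pderivIter j k (Dlist t κ f) y)
                  (pderivIter j (ι j - k) (Dlist t (mt - κ) g) y) := by
      intro κ _
      rw [pderivIter_smul _ (contDiff_gmul (contDiff_Dlist hf t κ)
        (contDiff_Dlist hg t _)) j (ι j),
        pderivIter_gmul (contDiff_Dlist hf t κ) (contDiff_Dlist hg t _) j (ι j)]
      simp only [Finset.smul_sum, smul_smul]
    rw [Finset.sum_congr rfl step, Finset.sum_sigma']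
    rw [hmask]
    refine Finset.sum_nbij' (i := fun p => p.1 + Pi.single j p.2)
      (j := fun κ' => ⟨Function.update κ' j 0, κ' j⟩) ?_ ?_ ?_ ?_ ?_
    · rintro ⟨κ, k⟩ hp
      simp only [Finset.mem_sigma, Finset.mem_Iic, Finset.mem_range] at hp
      obtain ⟨hκ, hk⟩ := hp
      rw [Finset.mem_Iic]
      intro i
      by_cases hij : i = j
      · subst hij
        simp only [Pi.add_apply, Pi.single_eq_same]
        have h1 := hκ i
        exact Nat.add_le_add h1 (Nat.lt_succ_iff.mp hk)
      · simp only [Pi.add_apply, Pi.single_apply, hij, if_false]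
        have h1 := hκ i
        exact Nat.add_le_add h1 (le_refl 0)
    · intro κ' hκ'
      rw [Finset.mem_Iic] at hκ'
      simp only [Finset.mem_sigma, Finset.mem_Iic, Finset.mem_range]
      constructor
      · intro i
        by_cases hij : i = j
        · subst hij
          simp [hmtj]
        · rw [Function.update_of_ne hij]
          have h1 := hκ' i
          simp only [Pi.add_apply, Pi.single_apply, hij, if_false] at h1
          exact le_of_le_of_eq h1 (Nat.add_zero _)
      · have h1 := hκ' j
        simp only [Pi.add_apply, Pi.single_eq_same, hmtj] at h1
        exact Nat.lt_succ_of_le (le_of_le_of_eq h1 (Nat.zero_add _))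
    · rintro ⟨κ, k⟩ hp
      simp only [Finset.mem_sigma, Finset.mem_Iic, Finset.mem_range] at hp
      obtain ⟨hκ, hk⟩ := hp
      have hκj : κ j = 0 := by
        have h1 := hκ j
        rw [hmtj] at h1
        exact Nat.le_zero.1 h1
      simp only [Sigma.mk.inj_iff]
      constructor
      · funext i
        by_cases hij : i = j
        · subst hij
          simp [hκj]
        · rw [Function.update_of_ne hij]
          simp [Pi.add_apply, Pi.single_apply, hij]
      · simp [hκj]
    · intro κ' hκ'
      rw [Finset.mem_Iic] at hκ'
      funext i
      by_cases hij : i = j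
      · subst hij
        simp [Function.update_self]
      · simp only [Pi.add_apply]
        rw [Function.update_of_ne hij]
        simp [Pi.single_apply, hij]
    · rintro ⟨κ, k⟩ hp
      simp only [Finset.mem_sigma, Finset.mem_Iic, Finset.mem_range] at hp
      obtain ⟨hκ, hk⟩ := hp
      have hκj : κ j = 0 := by
        have h1 := hκ j
        rw [hmtj] at h1
        exact Nat.le_zero.1 h1
      set κ' : Fin m → ℕ := κ + Pi.single j k with hκ'
      have hκ'j : κ' j = k := by simp [hκ', hκj]
      have hκ't : ∀ i ∈ t, κ' i = κ i := by
        intro i hi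
        have hij : i ≠ j := fun e => hj (e ▸ hi)
        simp only [hκ', Pi.add_apply]
        rw [Pi.single_eq_of_ne hij, Nat.add_zero]
      have hsub_j : ((mt + Pi.single j (ι j) - κ' : Fin m → ℕ)) j = ι j - k := by
        simp only [Pi.sub_apply, Pi.add_apply, Pi.single_eq_same, hmtj, hκ'j]
        rw [Nat.zero_add]
      have hsub_t : ∀ i ∈ t, ((mt + Pi.single j (ι j) - κ' : Fin m → ℕ)) i = ((mt - κ : Fin m → ℕ)) i := by
        intro i hi
        have hij : i ≠ j := fun e => hj (e ▸ hi)
        simp only [Pi.sub_apply, Pi.add_apply]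
        rw [Pi.single_eq_of_ne hij, hκ't i hi, Nat.add_zero]
      -- function factors
      have hDf : Dlist (j :: t) κ' f = pderivIter j k (Dlist t κ f) := by
        rw [Dlist_cons, hκ'j, Dlist_congr f (fun i hi => (hκ't i hi))]
      have hDg : Dlist (j :: t) ((mt + Pi.single j (ι j) - κ' : Fin m → ℕ)) g
          = pderivIter j (ι j - k) (Dlist t (mt - κ) g) := by
        rw [Dlist_cons, hsub_j, Dlist_congr g (fun i hi => (hsub_t i hi))]
      -- coefficient
      have hcoef : (∏ i, ((((mt + Pi.single j (ι j) : Fin m → ℕ)) i).choose (κ' i) : ℝ))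
          = (∏ i, ((mt i).choose (κ i) : ℝ)) * ((ι j).choose k : ℝ) := by
        rw [Fintype.prod_eq_mul_prod_compl j, Fintype.prod_eq_mul_prod_compl j
          (fun i => ((mt i).choose (κ i) : ℝ))]
        have h1 : ((((mt + Pi.single j (ι j) : Fin m → ℕ)) j).choose (κ' j) : ℝ) = ((ι j).choose k : ℝ) := by
          simp [hmtj, hκ'j]
        have h2 : ((mt j).choose (κ j) : ℝ) = 1 := by simp [hmtj, hκj]
        have h3 : ∀ i ∈ ({j}ᶜ : Finset (Fin m)),
            ((((mt + Pi.single j (ι j) : Fin m → ℕ)) i).choose (κ' i) : ℝ) = ((mt i).choose (κ i) : ℝ) := by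
          intro i hi
          have hij : i ≠ j := by simpa using hi
          simp only [hκ', Pi.add_apply]
          rw [Pi.single_eq_of_ne hij, Pi.single_eq_of_ne hij, Nat.add_zero, Nat.add_zero]
        rw [h1, h2, Finset.prod_congr rfl h3]
        ring
      rw [hcoef, hDf, hDg]

lemma sum_gmul {α : Type*} (s : Finset α) (F : α → GA L) (r : GA L) :
    gmul (∑ i ∈ s, F i) r = ∑ i ∈ s, gmul (F i) r := by
  classical
  induction s using Finset.induction_on with
  | empty => simp [zero_gmul]
  | insert _ _ h ih => rw [Finset.sum_insert h, Finset.sum_insert h, add_gmul, ih]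

lemma gmul_sum {α : Type*} (s : Finset α) (q : GA L) (F : α → GA L) :
    gmul q (∑ i ∈ s, F i) = ∑ i ∈ s, gmul q (F i) := by
  classical
  induction s using Finset.induction_on with
  | empty => simp [gmul_zero]
  | insert _ _ h ih => rw [Finset.sum_insert h, Finset.sum_insert h, gmul_add, ih]

lemma maskL_finRange (ι : Fin m → ℕ) : maskL (List.finRange m) ι = ι := by
  funext j
  simp [maskL, List.mem_finRange]

lemma pi_add_sub_cancel (ι κ : Fin m → ℕ) : (ι + κ) - ι = κ := by
  funext j
  simp only [Pi.sub_apply, Pi.add_apply]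
  omega

lemma zCont_eq_Iic (f : (Fin m → ℝ) → GA L) (x : Fin m → GA L) :
    zCont f x = ∑ ι ∈ Finset.Iic (fun _ => L : Fin m → ℕ),
      ((∏ j, ((ι j).factorial : ℝ))⁻¹) • gmul (Dmulti ι f (bodyVec x)) (soulProd x ι) := by
  rw [zCont]
  refine Finset.sum_nbij' (i := fun ι : Fin m → Fin (L + 1) => fun j => (ι j : ℕ))
    (j := fun κ => fun j => (⟨min (κ j) L, by omega⟩ : Fin (L + 1))) ?_ ?_ ?_ ?_ ?_
  · intro ι _
    rw [Finset.mem_Iic]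
    intro j
    exact Fin.is_le (ι j)
  · intro κ _
    exact Finset.mem_univ _
  · intro ι _
    funext j
    exact Fin.ext (by simp [min_eq_left (Fin.is_le (ι j))])
  · intro κ hκ
    rw [Finset.mem_Iic] at hκ
    funext j
    simp [min_eq_left (hκ j)]
  · intro ι _
    rfl

lemma coeff_eq {μ κ : Fin m → ℕ} (h : κ ≤ μ) :
    (∏ j, ((μ j).factorial : ℝ))⁻¹ * (∏ j, ((μ j).choose (κ j) : ℝ))
      = ((∏ j, ((κ j).factorial : ℝ)) * (∏ j, (((μ - κ) j).factorial : ℝ)))⁻¹ := by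
  rw [← Finset.prod_inv_distrib, ← Finset.prod_mul_distrib, ← Finset.prod_mul_distrib,
    ← Finset.prod_inv_distrib]
  refine Finset.prod_congr rfl fun j _ => ?_
  have hj := h j
  have hfact := Nat.choose_mul_factorial_mul_factorial hj
  have hc : ((μ j).choose (κ j) : ℝ) * ((κ j).factorial : ℝ) * ((μ j - κ j).factorial : ℝ)
      = ((μ j).factorial : ℝ) := by exact_mod_cast congrArg (Nat.cast (R := ℝ)) hfact
  have h1 : ((μ j).factorial : ℝ) ≠ 0 := Nat.cast_ne_zero.2 (Nat.factorial_ne_zero _)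
  have h2 : ((κ j).factorial : ℝ) ≠ 0 := Nat.cast_ne_zero.2 (Nat.factorial_ne_zero _)
  have h3 : ((μ j - κ j).factorial : ℝ) ≠ 0 := Nat.cast_ne_zero.2 (Nat.factorial_ne_zero _)
  have hsub : (μ - κ : Fin m → ℕ) j = μ j - κ j := rfl
  rw [hsub]
  field_simp
  linear_combination hc

lemma zCont_mul {f g : (Fin m → ℝ) → GA L} (hf : ContDiff ℝ (⊤ : ℕ∞) f) (hg : ContDiff ℝ (⊤ : ℕ∞) g)
    (hfe : ∀ y, f y ∈ evenPart L) (hge : ∀ y, g y ∈ evenPart L)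
    (x : Fin m → GA L) (hx : ∀ j, x j ∈ evenPart L) :
    zCont (fun y => gmul (f y) (g y)) x = gmul (zCont f x) (zCont g x) := by
  classical
  -- the common summand
  set E : Fin m → ℝ := bodyVec x with hE
  set term : (Fin m → ℕ) → (Fin m → ℕ) → GA L := fun μ κ =>
    (((∏ j, ((κ j).factorial : ℝ)) * (∏ j, (((μ - κ) j).factorial : ℝ)))⁻¹) •
      gmul (gmul (Dmulti κ f E) (Dmulti (μ - κ) g E)) (soulProd x μ) with hterm
  have hvanish : ∀ μ κ : Fin m → ℕ, (∃ j, L < μ j) → term μ κ = 0 := by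
    rintro μ κ ⟨j, hj⟩
    rw [hterm]
    simp only
    rw [soulProd_eq_zero j hj, gmul_zero, smul_zero]
  -- Step 1 : LHS as a sigma sum
  have hLHS : zCont (fun y => gmul (f y) (g y)) x
      = ∑ p ∈ (Finset.Iic (fun _ => L : Fin m → ℕ)).sigma (fun μ => Finset.Iic μ),
          term p.1 p.2 := by
    rw [zCont_eq_Iic, Finset.sum_sigma]
    refine Finset.sum_congr rfl fun μ _ => ?_
    have hD : Dmulti μ (fun y => gmul (f y) (g y))
        = fun y => ∑ κ ∈ Finset.Iic μ,
            (∏ i, ((μ i).choose (κ i) : ℝ)) •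
              gmul (Dlist (List.finRange m) κ f y) (Dlist (List.finRange m) (μ - κ) g y) := by
      rw [Dmulti_eq_Dlist, Dlist_gmul hf hg (List.finRange m) (List.nodup_finRange m) μ]
      simp only [maskL_finRange]
    rw [hD]
    rw [sum_gmul]
    rw [Finset.smul_sum]
    refine Finset.sum_congr rfl fun κ hκ => ?_
    rw [Finset.mem_Iic] at hκ
    rw [smul_gmul, smul_smul, coeff_eq hκ, hterm]
    rfl
  -- Step 2 : RHS as a product sum
  have hRHS : gmul (zCont f x) (zCont g x)
      = ∑ p ∈ (Finset.Iic (fun _ => L : Fin m → ℕ)) ×ˢ (Finset.Iic (fun _ => L : Fin m → ℕ)),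
          term (p.1 + p.2) p.1 := by
    rw [zCont_eq_Iic, zCont_eq_Iic, sum_gmul, Finset.sum_product]
    refine Finset.sum_congr rfl fun ι _ => ?_
    rw [gmul_sum]
    refine Finset.sum_congr rfl fun κ _ => ?_
    rw [smul_gmul, gmul_smul, smul_smul]
    have hre : gmul (gmul (Dmulti ι f E) (soulProd x ι)) (gmul (Dmulti κ g E) (soulProd x κ))
        = gmul (gmul (Dmulti ι f E) (Dmulti κ g E)) (soulProd x (ι + κ)) := by
      rw [gmul_mul_mul_comm (even_soulProd hx ι)
        (by rw [Dmulti_eq_Dlist]; exact even_Dlist hg (fun y => hge y) _ κ E),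
        soulProd_add hx]
    rw [hre, hterm]
    simp only
    rw [pi_add_sub_cancel, mul_inv]
  -- pointwise descriptions of Iic membership
  have hIicC : ∀ (c : ℕ) (v : Fin m → ℕ), v ∈ Finset.Iic (fun _ => c : Fin m → ℕ) ↔
      ∀ j, v j ≤ c := by
    intro c v
    rw [Finset.mem_Iic]
    exact ⟨fun h j => h j, fun h j => h j⟩
  have hIicP : ∀ (v w : Fin m → ℕ), v ∈ Finset.Iic w ↔ ∀ j, v j ≤ w j := by
    intro v w
    rw [Finset.mem_Iic]
    exact ⟨fun h j => h j, fun h j => h j⟩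
  -- Step 3 : the sigma sum extends to the big index set
  have hsub1 : (Finset.Iic (fun _ => L : Fin m → ℕ)).sigma (fun μ => Finset.Iic μ)
      ⊆ (Finset.Iic (fun _ => 2 * L : Fin m → ℕ)).sigma (fun μ => Finset.Iic μ) := by
    intro p hp
    rw [Finset.mem_sigma] at hp ⊢
    refine ⟨?_, hp.2⟩
    rw [hIicC]
    intro j
    have h5 : p.1 j ≤ L := (hIicC _ _).1 hp.1 j
    omega
  have hstep3 : ∑ p ∈ (Finset.Iic (fun _ => L : Fin m → ℕ)).sigma (fun μ => Finset.Iic μ),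
        term p.1 p.2
      = ∑ p ∈ (Finset.Iic (fun _ => 2 * L : Fin m → ℕ)).sigma (fun μ => Finset.Iic μ),
        term p.1 p.2 := by
    refine Finset.sum_subset hsub1 ?_
    intro p hp hnp
    rw [Finset.mem_sigma] at hp hnp
    have h2 : p.1 ∉ Finset.Iic (fun _ => L : Fin m → ℕ) := fun h => hnp ⟨h, hp.2⟩
    rw [hIicC] at h2
    push_neg at h2
    obtain ⟨j, hj⟩ := h2
    exact hvanish p.1 p.2 ⟨j, hj⟩
  -- Step 4 : the product sum also extends to the big index set
  have hstep4 : ∑ p ∈ (Finset.Iic (fun _ => L : Fin m → ℕ)) ×ˢ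
        (Finset.Iic (fun _ => L : Fin m → ℕ)), term (p.1 + p.2) p.1
      = ∑ p ∈ (Finset.Iic (fun _ => 2 * L : Fin m → ℕ)).sigma (fun μ => Finset.Iic μ),
        term p.1 p.2 := by
    have hsmall : ∑ p ∈ (Finset.Iic (fun _ => L : Fin m → ℕ)) ×ˢ
          (Finset.Iic (fun _ => L : Fin m → ℕ)), term (p.1 + p.2) p.1
        = ∑ p ∈ ((Finset.Iic (fun _ => 2 * L : Fin m → ℕ)).sigma
              (fun μ => Finset.Iic μ)).filter
            (fun p => (∀ j, p.2 j ≤ L) ∧ (∀ j, p.1 j - p.2 j ≤ L)),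
          term p.1 p.2 := by
      refine Finset.sum_nbij'
        (i := fun p => (⟨p.1 + p.2, p.1⟩ : Σ _ : Fin m → ℕ, Fin m → ℕ))
        (j := fun q => (q.2, q.1 - q.2)) ?_ ?_ ?_ ?_ ?_
      · intro p hp
        rw [Finset.mem_product, hIicC, hIicC] at hp
        obtain ⟨h1, h2⟩ := hp
        rw [Finset.mem_filter, Finset.mem_sigma, hIicC, hIicP]
        have hA : ∀ j, (p.1 + p.2 : Fin m → ℕ) j ≤ 2 * L := fun j => by
          have ha := h1 j
          have hb := h2 j
          simp only [Pi.add_apply]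
          omega
        have hB : ∀ j, p.1 j ≤ (p.1 + p.2 : Fin m → ℕ) j := fun j => by
          simp only [Pi.add_apply]
          exact Nat.le_add_right _ _
        have hD : ∀ j, ((p.1 + p.2 : Fin m → ℕ) - p.1) j ≤ L := fun j => by
          have hb := h2 j
          simp only [Pi.sub_apply, Pi.add_apply]
          omega
        exact ⟨⟨hA, hB⟩, h1, hD⟩
      · intro q hq
        rw [Finset.mem_filter, Finset.mem_sigma, hIicC, hIicP] at hq
        obtain ⟨⟨h1, h2⟩, h3, h4⟩ := hq
        rw [Finset.mem_product, hIicC, hIicC]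
        refine ⟨fun j => h3 j, fun j => ?_⟩
        have ha := h4 j
        simp only [Pi.sub_apply] at ha ⊢
        exact ha
      · intro p hp
        have h : (p.1 + p.2 : Fin m → ℕ) - p.1 = p.2 := pi_add_sub_cancel p.1 p.2
        simp only [h]
      · intro q hq
        rw [Finset.mem_filter, Finset.mem_sigma, hIicC, hIicP] at hq
        obtain ⟨⟨h1, h2⟩, h3, h4⟩ := hq
        have h : (q.2 + (q.1 - q.2) : Fin m → ℕ) = q.1 := by
          funext j
          simp only [Pi.add_apply, Pi.sub_apply]
          have := h2 j
          omega
        simp only [h]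
      · intro p hp
        rfl
    rw [hsmall]
    refine Finset.sum_subset (Finset.filter_subset _ _) ?_
    intro p hp hnp
    rw [Finset.mem_sigma, hIicC, hIicP] at hp
    rw [Finset.mem_filter] at hnp
    have hn : ¬((∀ j, p.2 j ≤ L) ∧ (∀ j, p.1 j - p.2 j ≤ L)) := by
      intro h
      exact hnp ⟨by rw [Finset.mem_sigma, hIicC, hIicP]; exact hp, h⟩
    obtain ⟨h1, h2⟩ := hp
    rcases not_and_or.1 hn with h | h
    · push_neg at h
      obtain ⟨j, hj⟩ := h
      have := h2 j
      exact hvanish p.1 p.2 ⟨j, by omega⟩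
    · push_neg at h
      obtain ⟨j, hj⟩ := h
      exact hvanish p.1 p.2 ⟨j, by omega⟩
  rw [hLHS, hRHS, hstep3, hstep4]

lemma zCont_add {f g : (Fin m → ℝ) → GA L} (hf : ContDiff ℝ (⊤ : ℕ∞) f) (hg : ContDiff ℝ (⊤ : ℕ∞) g)
    (x : Fin m → GA L) : zCont (f + g) x = zCont f x + zCont g x := by
  rw [zCont_eq_Iic, zCont_eq_Iic, zCont_eq_Iic, ← Finset.sum_add_distrib]
  refine Finset.sum_congr rfl fun ι _ => ?_
  have hD : Dmulti ι (f + g) (bodyVec x)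
      = Dmulti ι f (bodyVec x) + Dmulti ι g (bodyVec x) := by
    have h1 : (f + g) = fun y => f y + g y := rfl
    rw [Dmulti_eq_Dlist, Dmulti_eq_Dlist, Dmulti_eq_Dlist, h1, Dlist_add hf hg]
  rw [hD, add_gmul, smul_add]

lemma zCont_smul (c : ℝ) {f : (Fin m → ℝ) → GA L} (hf : ContDiff ℝ (⊤ : ℕ∞) f)
    (x : Fin m → GA L) : zCont (c • f) x = c • zCont f x := by
  rw [zCont_eq_Iic, zCont_eq_Iic, Finset.smul_sum]
  refine Finset.sum_congr rfl fun ι _ => ?_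
  have hD : Dmulti ι (c • f) (bodyVec x) = c • Dmulti ι f (bodyVec x) := by
    have h1 : (c • f) = fun y => c • f y := rfl
    rw [Dmulti_eq_Dlist, Dmulti_eq_Dlist, h1, Dlist_smul c hf]
  rw [hD, smul_gmul, smul_comm]

end GA

/-- The Grassmann analytic continuation `z` is linear, and it is
multiplicative on smooth functions valued in the even (hence commutative) part:
`z(fg) = z(f)z(g)`. -/
theorem zCont_linear_and_multiplicative (L m : ℕ) :
    (∀ f g : (Fin m → ℝ) → GA L, ContDiff ℝ (⊤ : ℕ∞) f → ContDiff ℝ (⊤ : ℕ∞) g →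
      ∀ x : Fin m → GA L, GA.zCont (f + g) x = GA.zCont f x + GA.zCont g x) ∧
    (∀ (c : ℝ) (f : (Fin m → ℝ) → GA L), ContDiff ℝ (⊤ : ℕ∞) f →
      ∀ x : Fin m → GA L, GA.zCont (c • f) x = c • GA.zCont f x) ∧
    (∀ f g : (Fin m → ℝ) → GA L, ContDiff ℝ (⊤ : ℕ∞) f → ContDiff ℝ (⊤ : ℕ∞) g →
      (∀ y, f y ∈ evenPart L) → (∀ y, g y ∈ evenPart L) →
      ∀ x : Fin m → GA L, (∀ j, x j ∈ evenPart L) →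
        GA.zCont (fun y => GA.gmul (f y) (g y)) x
          = GA.gmul (GA.zCont f x) (GA.zCont g x)) := by
  refine ⟨?_, ?_, ?_⟩
  · intro f g hf hg x
    exact GA.zCont_add hf hg x
  · intro c f hf x
    exact GA.zCont_smul c hf x
  · intro f g hf hg hfe hge x hx
    exact GA.zCont_mul hf hg hfe hge x hx
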